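/- Let G be a group, A ≤ Z(G) a central subgroup, and U ≤ A a subgroup of finite p-power index in A. If U is p-separable in G, then there exists a normal subgroup R ⊴ G of finite p-power index in G with R ∩ A = U. -/

import Mathlib

/-!
Pick a representative of each of the finitely many cosets of `U` in `A`, and for each
representative outside `U` a finite `p`-quotient of `G` separating it from `U`. The kernels
intersect in a normal subgroup `K` of `p`-power index with `K ⊓ A ≤ U`. As `U` is central,
`R = U ⊔ K` is normal, its index divides that of `K`, and Dedekind's law gives
`R ⊓ A = U ⊔ (K ⊓ A) = U`.
-/

/-- A subset `M` of a group `G` is `p`-separable if every `a ∈ G` with `a ∉ M` can be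
separated from `M` by a homomorphism of `G` onto a finite `p`-group. -/
def PSep (p : ℕ) {G : Type} [Group G] (M : Set G) : Prop :=
  ∀ a : G, a ∉ M →
    ∃ (X : Type) (_ : Group X), Finite X ∧ IsPGroup p X ∧
      ∃ φ : G →* X, Function.Surjective φ ∧ φ a ∉ φ '' M

namespace Subgroup

variable {G : Type*} [Group G]

theorem normal_of_le_center {H : Subgroup G} (h : H ≤ center G) : H.Normal :=
  ⟨fun a ha g => by rwa [mem_center_iff.mp (h ha) g, mul_inv_cancel_right]⟩

theorem index_inf_dvd_of_normal (H K : Subgroup G) [K.Normal] :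
    (H ⊓ K).index ∣ H.index * K.index := by
  rw [← relIndex_mul_index (inf_le_left : H ⊓ K ≤ H), inf_relIndex_left, mul_comm]
  exact mul_dvd_mul_left _ (relIndex_dvd_index_of_normal K H)

theorem sup_inf_assoc_of_le_of_normal {H A : Subgroup G} (K : Subgroup G) [K.Normal]
    (hHA : H ≤ A) : (H ⊔ K) ⊓ A = H ⊔ K ⊓ A := by
  refine le_antisymm ?_ (sup_le (le_inf le_sup_left hHA) (inf_le_inf_right A le_sup_right))
  rintro _ ⟨hx, hxA⟩
  obtain ⟨h, hh, k, hk, rfl⟩ := mem_sup_of_normal_right.mp hx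
  have hkA : k ∈ A := by simpa using mul_mem (inv_mem (hHA hh)) hxA
  exact mul_mem_sup hh ⟨hk, hkA⟩

def IsNormalPPowIndex (p : ℕ) (K : Subgroup G) : Prop :=
  K.Normal ∧ ∃ n : ℕ, K.index = p ^ n

namespace IsNormalPPowIndex

variable {p : ℕ} {H K : Subgroup G}

theorem top : (⊤ : Subgroup G).IsNormalPPowIndex p :=
  ⟨inferInstance, 0, by rw [index_top, pow_zero]⟩

theorem mono (hp : p.Prime) (hH : H.IsNormalPPowIndex p) (hHK : H ≤ K) [K.Normal] :
    K.IsNormalPPowIndex p := by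
  obtain ⟨n, hn⟩ := hH.2
  obtain ⟨k, -, hk⟩ := (Nat.dvd_prime_pow hp).mp (hn ▸ index_dvd_of_le hHK)
  exact ⟨‹_›, k, hk⟩

theorem inf (hp : p.Prime) (hH : H.IsNormalPPowIndex p) (hK : K.IsNormalPPowIndex p) :
    (H ⊓ K).IsNormalPPowIndex p := by
  obtain ⟨_, m, hm⟩ := hH
  obtain ⟨_, n, hn⟩ := hK
  have hdvd : (H ⊓ K).index ∣ p ^ (m + n) := by
    rw [pow_add, ← hm, ← hn]
    exact index_inf_dvd_of_normal H K
  obtain ⟨k, -, hk⟩ := (Nat.dvd_prime_pow hp).mp hdvd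
  exact ⟨inferInstance, k, hk⟩

theorem iInf (hp : p.Prime) {ι : Type*} [Finite ι] {K : ι → Subgroup G}
    (hK : ∀ i, (K i).IsNormalPPowIndex p) : (⨅ i, K i).IsNormalPPowIndex p := by
  cases nonempty_fintype ι
  rw [← Finset.inf_univ_eq_iInf]
  exact Finset.inf_induction top (fun _ h₁ _ h₂ => h₁.inf hp h₂) fun i _ => hK i

end IsNormalPPowIndex

end Subgroup

namespace PSep

variable {p : ℕ} {G : Type} [Group G]

theorem exists_isNormalPPowIndex {M : Set G} (hp : p.Prime) (hM : PSep p M) (a : G) :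
    ∃ K : Subgroup G, K.IsNormalPPowIndex p ∧ ∀ k ∈ K, k * a ∈ M → a ∈ M := by
  by_cases ha : a ∈ M
  · exact ⟨⊤, .top, fun _ _ _ => ha⟩
  obtain ⟨X, _, _, hX, φ, hφ, hsep⟩ := hM a ha
  have : Fact p.Prime := ⟨hp⟩
  obtain ⟨n, hn⟩ := IsPGroup.iff_card.mp hX
  refine ⟨φ.ker, ⟨inferInstance, n, ?_⟩, fun k hk hka => ?_⟩
  · rw [Subgroup.index, ← hn]
    exact Nat.card_congr (QuotientGroup.quotientKerEquivOfSurjective φ hφ).toEquiv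
  · exact (hsep ⟨k * a, hka, by rw [map_mul, φ.mem_ker.mp hk, one_mul]⟩).elim

theorem exists_isNormalPPowIndex_inf_le {U A : Subgroup G} (hp : p.Prime)
    (hU : PSep p (U : Set G)) (hUA : U.relIndex A ≠ 0) :
    ∃ K : Subgroup G, K.IsNormalPPowIndex p ∧ K ⊓ A ≤ U := by
  choose K hK hKsep using hU.exists_isNormalPPowIndex hp
  have : (U.subgroupOf A).FiniteIndex := ⟨hUA⟩
  refine ⟨⨅ c : A ⧸ U.subgroupOf A, K c.out, .iInf hp fun _ => hK _, ?_⟩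
  rintro k ⟨hkK, hkA⟩
  set a : A := (QuotientGroup.mk ⟨k, hkA⟩ : A ⧸ U.subgroupOf A).out
  have hak : (a : G)⁻¹ * k ∈ U :=
    Subgroup.mem_subgroupOf.mp (QuotientGroup.eq.mp (Quotient.out_eq _) : a⁻¹ * ⟨k, hkA⟩ ∈ _)
  have ha : (a : G) ∈ U :=
    hKsep a k⁻¹ (inv_mem (Subgroup.mem_iInf.mp hkK _)) (by simpa using inv_mem hak)
  simpa using mul_mem ha hak

end PSep

/-- If `A` is central in `G`, `U ≤ A` has finite `p`-power index in `A` and `U` is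
`p`-separable in `G`, then there is a normal subgroup `R ⊴ G` of finite `p`-power index
with `R ∩ A = U`. -/
theorem exists_normal_pPow_index_inter_eq (p : ℕ) (hp : p.Prime)
    (G : Type) [Group G] (A U : Subgroup G)
    (hA : A ≤ Subgroup.center G) (hUA : U ≤ A)
    (hUidx : ∃ n : ℕ, U.relIndex A = p ^ n)
    (hUsep : PSep p (U : Set G)) :
    ∃ R : Subgroup G, R.Normal ∧ (∃ n : ℕ, R.index = p ^ n) ∧ R ⊓ A = U := by
  have : U.Normal := Subgroup.normal_of_le_center (hUA.trans hA)
  obtain ⟨n, hn⟩ := hUidx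
  obtain ⟨K, hK, hKA⟩ :=
    hUsep.exists_isNormalPPowIndex_inf_le hp (hn ▸ pow_ne_zero n hp.ne_zero)
  have : K.Normal := hK.1
  obtain ⟨hR, hRidx⟩ := hK.mono hp (le_sup_right : K ≤ U ⊔ K)
  refine ⟨U ⊔ K, hR, hRidx, ?_⟩
  rw [Subgroup.sup_inf_assoc_of_le_of_normal K hUA, sup_eq_left.mpr hKA]
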